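/- arXiv:2101.00988 — 3 statements merged into one kernel-verified Lean document; each statement's English description precedes it below -/
import Mathlib

section
/- Let A be a 5×5 integer matrix and s ∈ ℤ⁵. There exists a vector α = (a₁,…,a₆) ∈ ℤ⁶ such that the 6×6 matrix with columns (v₁,s₁),…,(v₅,s₅) (columns vᵢ of A extended by sᵢ) and α has determinant ±1 if and only if gcd(det A, det(A)₁, det(A)₂, det(A)₃, det(A)₄, det(A)₅) = 1, where (A)ⱼ denotes A with its j-th row replaced by s. -/
/-! Expanding the determinant along the last column writes it as `∑ aᵢ cᵢ`, where the cofactors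
`cᵢ` of that column are `det A` and `-det (A)ⱼ`. Hence the determinants obtained by varying the
last column are exactly the integer combinations of these minors, and `±1` is among them iff the
minors are jointly coprime. -/

/-- The 6×6 matrix whose first five columns are the columns of `A` extended by the
entries of `s` in the sixth row, and whose sixth column is `a`. -/
def extMat (A : Matrix (Fin 5) (Fin 5) ℤ) (s : Fin 5 → ℤ) (a : Fin 6 → ℤ) :
    Matrix (Fin 6) (Fin 6) ℤ :=
  Matrix.of fun i j =>
    if hj : (j : ℕ) < 5 then
      if hi : (i : ℕ) < 5 then A ⟨i, hi⟩ ⟨j, hj⟩ else s ⟨j, hj⟩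
    else a i

namespace Matrix

variable {R : Type*} [CommRing R] {n : ℕ}

theorem adjugate_last_last (M : Matrix (Fin (n + 1)) (Fin (n + 1)) R) :
    adjugate M (Fin.last n) (Fin.last n) = (M.submatrix Fin.castSucc Fin.castSucc).det := by
  rw [adjugate_fin_succ_eq_det_submatrix, Fin.succAbove_last, ← two_mul, pow_mul]
  simp

theorem adjugate_last_castSucc (M : Matrix (Fin (n + 1)) (Fin (n + 1)) R) (j : Fin n) :
    adjugate M (Fin.last n) j.castSucc =
      -((M.submatrix Fin.castSucc Fin.castSucc).updateRow j
          fun k => M (Fin.last n) k.castSucc).det := by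
  -- swapping row `j` with the last row reduces to `adjugate_last_last`
  set N := M.updateRow j.castSucc (M (Fin.last n))
  have hswap : M.updateRow j.castSucc (Pi.single (Fin.last n) 1) =
      (N.updateRow (Fin.last n) (Pi.single (Fin.last n) 1)).submatrix
        (Equiv.swap j.castSucc (Fin.last n)) id := by
    ext i k
    rcases eq_or_ne i j.castSucc with rfl | hi
    · simp [N]
    rcases eq_or_ne i (Fin.last n) with rfl | hl
    · simp [N, hi]
    · simp [N, hi, hl, Equiv.swap_apply_of_ne_of_ne]
  have hblock : N.submatrix Fin.castSucc Fin.castSucc =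
      (M.submatrix Fin.castSucc Fin.castSucc).updateRow j fun k => M (Fin.last n) k.castSucc := by
    ext i k
    rcases eq_or_ne i j with rfl | hi
    · simp [N]
    · simp [N, hi]
  rw [adjugate_apply, hswap, det_permute, Equiv.Perm.sign_swap (Fin.castSucc_ne_last j),
    ← adjugate_apply, adjugate_last_last, hblock]
  simp

end Matrix

theorem Int.gcd_finsetGcd_eq_one_iff {ι : Type*} (x : ℤ) (s : Finset ι) (y : ι → ℤ) :
    Int.gcd x (s.gcd y) = 1 ↔ ∃ (b : ℤ) (c : ι → ℤ), x * b + ∑ i ∈ s, y i * c i = 1 := by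
  set g := s.gcd y
  constructor
  · intro h
    obtain ⟨c, hc⟩ := s.gcd_eq_sum_mul y
    refine ⟨x.gcdA g, fun i => c i * x.gcdB g, ?_⟩
    calc x * x.gcdA g + ∑ i ∈ s, y i * (c i * x.gcdB g)
        = x * x.gcdA g + (∑ i ∈ s, y i * c i) * x.gcdB g := by
          rw [Finset.sum_mul]; simp only [mul_assoc]
      _ = 1 := by rw [← hc, ← Int.gcd_eq_gcd_ab, h, Nat.cast_one]
  · rintro ⟨b, c, h⟩
    have hdvd : (Int.gcd x g : ℤ) ∣ 1 := by
      rw [← h]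
      refine dvd_add ((Int.gcd_dvd_left _ _).mul_right b) (Finset.dvd_sum fun i hi => ?_)
      exact ((Int.gcd_dvd_right _ _).trans (Finset.gcd_dvd hi)).mul_right _
    exact Nat.dvd_one.mp (by exact_mod_cast hdvd)

section extMat

variable (A : Matrix (Fin 5) (Fin 5) ℤ) (s : Fin 5 → ℤ) (a : Fin 6 → ℤ)

theorem extMat_submatrix_castSucc : (extMat A s a).submatrix Fin.castSucc Fin.castSucc = A := by
  ext i j
  simp [extMat]

theorem extMat_last_castSucc (j : Fin 5) : extMat A s a (Fin.last 5) j.castSucc = s j := by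
  simp [extMat]

theorem extMat_apply_last (i : Fin 6) : extMat A s a i (Fin.last 5) = a i := by
  simp [extMat]

theorem det_extMat :
    (extMat A s a).det = a (Fin.last 5) * A.det - ∑ j, a j.castSucc * (A.updateRow j s).det := by
  rw [Matrix.det_eq_sum_mul_adjugate_col _ (Fin.last 5), Fin.sum_univ_castSucc,
    Matrix.adjugate_last_last]
  simp only [extMat_apply_last, Matrix.adjugate_last_castSucc, extMat_last_castSucc, mul_neg,
    Finset.sum_neg_distrib]
  rw [extMat_submatrix_castSucc]
  ring

end extMat

/-- There is a sixth column making the extended matrix unimodular iff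
gcd(det A, det (A)₁, …, det (A)₅) = 1. -/
theorem stmt_11 (A : Matrix (Fin 5) (Fin 5) ℤ) (s : Fin 5 → ℤ) :
    (∃ a : Fin 6 → ℤ, (extMat A s a).det = 1 ∨ (extMat A s a).det = -1) ↔
      Int.gcd A.det
        ((Finset.univ : Finset (Fin 5)).gcd fun j => (A.updateRow j s).det) = 1 := by
  rw [Int.gcd_finsetGcd_eq_one_iff]
  constructor
  · rintro ⟨a, ha⟩
    obtain ⟨ε, hε⟩ : ∃ ε : ℤ, ε * (extMat A s a).det = 1 := by
      rcases ha with h | h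
      exacts [⟨1, by rw [h]; rfl⟩, ⟨-1, by rw [h]; rfl⟩]
    refine ⟨ε * a (Fin.last 5), fun j => -(ε * a j.castSucc), ?_⟩
    rw [← hε, det_extMat, mul_sub, Finset.mul_sum, sub_eq_add_neg, ← Finset.sum_neg_distrib]
    congr 1
    · ring
    · exact Finset.sum_congr rfl fun j _ => by ring
  · rintro ⟨b, c, h⟩
    refine ⟨Fin.snoc (fun j => -c j) b, Or.inl ?_⟩
    rw [det_extMat, ← h, Fin.snoc_last, sub_eq_add_neg, ← Finset.sum_neg_distrib]
    congr 1
    · ring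
    · exact Finset.sum_congr rfl fun j _ => by rw [Fin.snoc_castSucc]; ring
end

section
/- There is no 5×5 matrix M with entries in {0,1} such that all five columns of M have exactly three nonzero entries, M is invertible over ℤ/2, M has integer determinant ±3, and every 4×4 minor of M corresponding to an entry equal to 1 has determinant ±1. -/
/-!
Expanding `det M = 3ε` (with `ε = ±1`) along a column writes it as a sum of three cofactors, each
`±1`, so every cofactor at a one of `M` equals `ε`; expanding along a row then shows that every
row of `M` has three ones. Since all columns of `M` sum to `3`, every row of the cofactor matrix
sums to `ε`. If the supports `Sᵢ`, `Sᵢ'` of two distinct rows covered all five columns,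
inclusion–exclusion for the cofactors of row `i'`, whose sum over `Sᵢ` vanishes, would give
`ε + |Sᵢ ∩ Sᵢ'| ε = 0 + 3ε`, i.e. `|Sᵢ ∩ Sᵢ'| = 2` and `|Sᵢ ∪ Sᵢ'| = 4`, which is absurd.
Hence distinct rows share at least two ones, and counting the ones of the other four rows inside
the support of the first row gives at least `4 · 2 = 8`, whereas column counts give `3 · 2 = 6`.
-/

open Finset Matrix

theorem Int.eq_of_isUnit_of_sum_eq_card_mul {ι : Type*} {s : Finset ι} {f : ι → ℤ} {ε : ℤ}
    (hε : IsUnit ε) (hf : ∀ i ∈ s, IsUnit (f i)) (h : ∑ i ∈ s, f i = #s * ε) :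
    ∀ i ∈ s, f i = ε := by
  have hle : ∀ i ∈ s, f i * ε ≤ 1 := fun i hi => by
    rcases Int.isUnit_iff.1 ((hf i hi).mul hε) with h | h <;> omega
  have hsum : ∑ i ∈ s, f i * ε = ∑ _i ∈ s, 1 := by
    rw [← sum_mul, h, mul_assoc, Int.isUnit_mul_self hε]; simp
  intro i hi
  calc f i = f i * ε * ε := by rw [mul_assoc, Int.isUnit_mul_self hε, mul_one]
    _ = ε := by rw [(sum_eq_sum_iff_of_le hle).1 hsum i hi, one_mul]

theorem Finset.sum_mul_eq_sum_filter_ne_zero {ι R : Type*} [Fintype ι] [Semiring R]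
    [DecidableEq R] {v : ι → R} (hv : ∀ i, v i = 0 ∨ v i = 1) (f : ι → R) :
    ∑ i, v i * f i = ∑ i ∈ {i | v i ≠ 0}, f i := by
  rw [← sum_filter_of_ne fun i _ h => left_ne_zero_of_mul h]
  exact sum_congr rfl fun i hi => by simp [(hv i).resolve_left (mem_filter.1 hi).2]

namespace Matrix

variable {n R : Type*} [Fintype n]

section Support

variable [Zero R] [DecidableEq R]

def rowSupport (M : Matrix n n R) (i : n) : Finset n := {j | M i j ≠ 0}

def colSupport (M : Matrix n n R) (j : n) : Finset n := {i | M i j ≠ 0}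

variable {M : Matrix n n R}

@[simp]
theorem mem_rowSupport {i j : n} : j ∈ M.rowSupport i ↔ M i j ≠ 0 := by simp [rowSupport]

@[simp]
theorem mem_colSupport {i j : n} : i ∈ M.colSupport j ↔ M i j ≠ 0 := by simp [colSupport]

theorem sum_card_inter_rowSupport [DecidableEq n] (i : n) :
    ∑ i', #(M.rowSupport i ∩ M.rowSupport i') =
      ∑ j ∈ M.rowSupport i, #(M.colSupport j) := by
  simp only [← filter_mem_eq_inter, card_filter, colSupport, mem_rowSupport]
  exact sum_comm

end Support

theorem mul_sum_adjugate_of_forall_sum_col_eq [DecidableEq n] [CommRing R] {M : Matrix n n R}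
    {c : R} (hc : ∀ j, ∑ i, M i j = c) (i : n) : c * ∑ j, M.adjugate j i = M.det := by
  calc c * ∑ j, M.adjugate j i = ∑ j, (∑ i', M i' j) * M.adjugate j i := by simp [hc, mul_sum]
    _ = ∑ i', (M * M.adjugate) i' i := by simp only [mul_apply, sum_mul]; exact sum_comm
    _ = M.det := by simp [mul_adjugate, one_apply]

section ZeroOne

variable {M : Matrix n n ℤ}

theorem sum_col_eq_card_colSupport (h01 : ∀ i j, M i j = 0 ∨ M i j = 1) (j : n) :
    ∑ i, M i j = #(M.colSupport j) := by
  simpa [colSupport] using sum_mul_eq_sum_filter_ne_zero (h01 · j) 1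

variable [DecidableEq n]

theorem sum_rowSupport_adjugate (h01 : ∀ i j, M i j = 0 ∨ M i j = 1) (i i' : n) :
    ∑ j ∈ M.rowSupport i, M.adjugate j i' = (M * M.adjugate) i i' :=
  (sum_mul_eq_sum_filter_ne_zero (h01 i) _).symm

theorem sum_colSupport_adjugate (h01 : ∀ i j, M i j = 0 ∨ M i j = 1) (j j' : n) :
    ∑ i ∈ M.colSupport j, M.adjugate j' i = (M.adjugate * M) j' j := by
  rw [mul_apply, colSupport, ← sum_mul_eq_sum_filter_ne_zero (h01 · j)]
  exact sum_congr rfl fun _ _ => mul_comm _ _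

theorem sum_adjugate_of_subset_rowSupport {ε : ℤ} {i : n}
    (hadj : ∀ j, M i j ≠ 0 → M.adjugate j i = ε) {s : Finset n} (hs : s ⊆ M.rowSupport i) :
    ∑ j ∈ s, M.adjugate j i = #s * ε := by
  rw [sum_congr rfl fun j hj => hadj j (mem_rowSupport.1 (hs hj)), sum_const, nsmul_eq_mul]

theorem adjugate_eq_of_ne_zero (h01 : ∀ i j, M i j = 0 ∨ M i j = 1) {k : ℕ} {ε : ℤ} {j : n}
    (hcol : #(M.colSupport j) = k) (hdet : M.det = k * ε) (hε : IsUnit ε)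
    (hunit : ∀ i, M i j ≠ 0 → IsUnit (M.adjugate j i)) {i : n} (hij : M i j ≠ 0) :
    M.adjugate j i = ε := by
  refine Int.eq_of_isUnit_of_sum_eq_card_mul (s := M.colSupport j) hε
    (fun i hi => hunit i (mem_colSupport.1 hi)) ?_ i (mem_colSupport.2 hij)
  rw [sum_colSupport_adjugate h01, adjugate_mul, hcol, ← hdet]
  simp

theorem card_rowSupport_eq (h01 : ∀ i j, M i j = 0 ∨ M i j = 1) {k : ℕ} {ε : ℤ}
    (hε : IsUnit ε) (hdet : M.det = k * ε) {i : n} (hadj : ∀ j, M i j ≠ 0 → M.adjugate j i = ε) :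
    #(M.rowSupport i) = k := by
  have h : (#(M.rowSupport i) : ℤ) * ε = k * ε := by
    rw [← sum_adjugate_of_subset_rowSupport hadj subset_rfl, sum_rowSupport_adjugate h01,
      mul_adjugate, hdet]
    simp
  exact_mod_cast mul_right_cancel₀ hε.ne_zero h

theorem card_eq_card_rowSupport_add_one_of_union_eq_univ (h01 : ∀ i j, M i j = 0 ∨ M i j = 1)
    {ε : ℤ} (hε : ε ≠ 0) {i i' : n} (hii' : i ≠ i')
    (hadj : ∀ j, M i' j ≠ 0 → M.adjugate j i' = ε) (hsum : ∑ j, M.adjugate j i' = ε)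
    (hunion : M.rowSupport i ∪ M.rowSupport i' = univ) :
    Fintype.card n = #(M.rowSupport i) + 1 := by
  have horth : ∑ j ∈ M.rowSupport i, M.adjugate j i' = 0 := by
    simp [sum_rowSupport_adjugate h01, mul_adjugate, hii']
  have h := sum_union_inter (s₁ := M.rowSupport i) (s₂ := M.rowSupport i')
    (f := (M.adjugate · i'))
  rw [hunion, hsum, horth, sum_adjugate_of_subset_rowSupport hadj inter_subset_right,
    sum_adjugate_of_subset_rowSupport hadj subset_rfl] at h
  have hinter : #(M.rowSupport i ∩ M.rowSupport i') + 1 = #(M.rowSupport i') := by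
    have : ((#(M.rowSupport i ∩ M.rowSupport i') + 1 : ℕ) : ℤ) * ε
        = #(M.rowSupport i') * ε := by
      push_cast; linarith
    exact_mod_cast mul_right_cancel₀ hε this
  have hcard := card_union_add_card_inter (M.rowSupport i) (M.rowSupport i')
  rw [hunion, card_univ] at hcard
  omega

theorem card_add_card_rowSupport_lt (h01 : ∀ i j, M i j = 0 ∨ M i j = 1) {ε : ℤ}
    (hε : ε ≠ 0) {i i' : n} (hii' : i ≠ i') (hadj : ∀ j, M i' j ≠ 0 → M.adjugate j i' = ε)
    (hsum : ∑ j, M.adjugate j i' = ε) (hcard : Fintype.card n ≠ #(M.rowSupport i) + 1) :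
    #(M.rowSupport i) + #(M.rowSupport i') <
      #(M.rowSupport i ∩ M.rowSupport i') + Fintype.card n := by
  have hlt : #(M.rowSupport i ∪ M.rowSupport i') < Fintype.card n :=
    (card_lt_iff_ne_univ _).2 fun hunion =>
      hcard (card_eq_card_rowSupport_add_one_of_union_eq_univ h01 hε hii' hadj hsum hunion)
  have := card_union_add_card_inter (M.rowSupport i) (M.rowSupport i')
  omega

end ZeroOne

end Matrix

/-- No 5×5 binary matrix has all columns with exactly three nonzero entries, is
invertible over ℤ/2, has integer determinant ±3, and has all 4×4 minors at entries
equal to 1 of determinant ±1. -/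
theorem stmt_14 :
    ¬ ∃ M : Matrix (Fin 5) (Fin 5) ℤ,
      (∀ i j, M i j = 0 ∨ M i j = 1) ∧
      (∀ j : Fin 5, (Finset.univ.filter fun i => M i j ≠ 0).card = 3) ∧
      (M.map (Int.cast : ℤ → ZMod 2)).det ≠ 0 ∧
      (M.det = 3 ∨ M.det = -3) ∧
      (∀ i j : Fin 5, M i j = 1 →
        ((M.submatrix i.succAbove j.succAbove).det = 1 ∨
         (M.submatrix i.succAbove j.succAbove).det = -1)) := by
  rintro ⟨M, h01, hcol, -, hdet, hminor⟩
  replace hcol : ∀ j, #(M.colSupport j) = 3 := hcol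
  obtain ⟨ε, hε, hdet⟩ : ∃ ε : ℤ, IsUnit ε ∧ M.det = (3 : ℕ) * ε := by
    rcases hdet with h | h
    exacts [⟨1, isUnit_one, by simp [h]⟩, ⟨-1, isUnit_one.neg, by simp [h]⟩]
  have hunit : ∀ i j, M i j ≠ 0 → IsUnit (M.adjugate j i) := fun i j hij => by
    rw [adjugate_fin_succ_eq_det_submatrix]
    exact (isUnit_one.neg.pow _).mul (Int.isUnit_iff.2 (hminor i j ((h01 i j).resolve_left hij)))
  have hadj : ∀ i j, M i j ≠ 0 → M.adjugate j i = ε := fun i j =>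
    adjugate_eq_of_ne_zero h01 (hcol j) hdet hε (hunit · j)
  have hrow : ∀ i, #(M.rowSupport i) = 3 := fun i => card_rowSupport_eq h01 hε hdet (hadj i)
  have hsum : ∀ i, ∑ j, M.adjugate j i = ε := fun i => by
    have := mul_sum_adjugate_of_forall_sum_col_eq (M := M) (c := 3)
      (fun j => by rw [sum_col_eq_card_colSupport h01, hcol]; rfl) i
    omega
  have hinter : ∀ i', i' ≠ 0 → 2 ≤ #(M.rowSupport 0 ∩ M.rowSupport i') := fun i' hi' => by
    have := card_add_card_rowSupport_lt h01 hε.ne_zero hi'.symm (hadj i') (hsum i')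
      (by simp [hrow])
    simp only [hrow, Fintype.card_fin] at this
    omega
  have hcount := sum_card_inter_rowSupport (M := M) 0
  simp only [hcol, hrow, sum_const, Fin.sum_univ_five, inter_self, smul_eq_mul] at hcount
  have := hinter 1 (by decide); have := hinter 2 (by decide)
  have := hinter 3 (by decide); have := hinter 4 (by decide)
  omega
end

section
/- The map from nonzero vectors of (ℤ/2)⁴ to ℤ⁵ sending x=(1,0,0,0)↦e₁, y=(0,1,0,0)↦e₂, x+y↦e₁+e₂, and for each of the three coset representatives a₁=(0,0,1,0), a₂=(0,0,0,1), a₃=(0,0,1,1): a_i↦e_{i+2}, a_i+x↦e₁+e_{i+2}, a_i+y↦e₂+e_{i+2}, a_i+x+y↦e₁+e₂+e_{i+2}, sends every linearly independent subset of (ℤ/2)⁴ \ {0} to a subset of ℤ⁵ that extends to a basis of ℤ⁵. -/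
/-- The explicit coloring of the nonzero vectors of (ℤ/2)⁴ by vectors of ℤ⁵:
the first two coordinates record v₁, v₂, and coordinates 3, 4, 5 record which of the
three cosets (given by (v₃,v₄) = (1,0), (0,1), (1,1)) the vector lies in. -/
def Lam (v : Fin 4 → ZMod 2) : Fin 5 → ℤ :=
  ![(if v 0 = 1 then 1 else 0),
    (if v 1 = 1 then 1 else 0),
    (if v 2 = 1 ∧ v 3 = 0 then 1 else 0),
    (if v 2 = 0 ∧ v 3 = 1 then 1 else 0),
    (if v 2 = 1 ∧ v 3 = 1 then 1 else 0)]

/-!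
Extend the independent set to a basis `w` of `(ℤ/2)⁴` and let `X` be the `4 × 5` integer matrix
with rows `Lam (w j)`. Since `Lam v 0`, `Lam v 1`, `Lam v 2 + Lam v 4` and `Lam v 3 + Lam v 4`
reduce mod 2 to `v 0, …, v 3`, adding the last column of `X` to columns 2 and 3 gives a lift
of `w`; by multilinearity the three minors of `X` omitting column 2, 3 or 4 therefore add up,
with signs, to an odd number, so one of them is odd. Such a minor has rows with `0/1` entries in
the first two columns and at most one `1` elsewhere; pivoting on these `1`s reduces it to a
`2 × 2` determinant with entries in `{-1, 0, 1}`, so it is at most `2` in absolute value, hence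
`±1`. Appending the corresponding standard vector then completes the rows of `X` to a `ℤ`-basis.
-/

open Matrix Module

theorem Module.exists_finBasis_superset {K V : Type*} [DivisionRing K] [AddCommGroup V]
    [Module K V] [FiniteDimensional K V] {n : ℕ} (hn : finrank K V = n) {s : Set V}
    (hs : LinearIndepOn K id s) : ∃ b : Basis (Fin n) K V, s ⊆ Set.range b := by
  let B := Basis.extend hs
  refine ⟨B.reindex (B.indexEquiv (finBasisOfFinrankEq K V hn)), ?_⟩
  rw [Basis.range_reindex, Basis.range_extend]
  exact hs.subset_extend _

theorem exists_basis_of_isUnit_det_succAbove {R : Type*} [CommRing R] {n : ℕ}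
    (u : Fin n → Fin (n + 1) → R) (k : Fin (n + 1))
    (hu : IsUnit (of fun j i => u j (k.succAbove i)).det) :
    ∃ b : Basis (Fin (n + 1)) R (Fin (n + 1) → R), ∀ j, u j ∈ Set.range b := by
  let v : Fin (n + 1) → Fin (n + 1) → R := Fin.cons (Pi.single k 1) u
  have hdet : (of v).det = (-1) ^ (k : ℕ) * (of fun j i => u j (k.succAbove i)).det := by
    rw [det_succ_row_zero, Finset.sum_eq_single k]
    · simp [v, submatrix]
    · intro i _ hik
      simp [v, hik]
    · simp
  have hv : IsUnit ((Pi.basisFun R (Fin (n + 1))).det v) := by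
    rw [Pi.basisFun_det_apply, hdet]
    exact ((isUnit_neg_one (α := R)).pow _).mul hu
  obtain ⟨hli, hspan⟩ := (Basis.is_basis_iff_det _).2 hv
  exact ⟨Basis.mk hli hspan.ge, fun j => ⟨j.succ, by simp [v]⟩⟩

section TwoTopRows

variable {n : ℕ}

def IsDiffRow (x : Fin n → ℤ) : Prop :=
  (∀ i : Fin n, 2 ≤ (i : ℕ) → x i = 0) ∧ ∀ i : Fin n, (i : ℕ) < 2 → |x i| ≤ 1

def IsIndicatorRow (x : Fin n → ℤ) (i₀ : Fin n) : Prop :=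
  (∀ i : Fin n, 2 ≤ (i : ℕ) → x i = if i = i₀ then 1 else 0) ∧
    ∀ i : Fin n, (i : ℕ) < 2 → 0 ≤ x i ∧ x i ≤ 1

def IsAdmissibleRow (x : Fin n → ℤ) : Prop :=
  IsDiffRow x ∨ ∃ i₀ : Fin n, 2 ≤ (i₀ : ℕ) ∧ IsIndicatorRow x i₀

theorem IsIndicatorRow.apply_self {x : Fin n → ℤ} {i₀ : Fin n} (hx : IsIndicatorRow x i₀)
    (hi₀ : 2 ≤ (i₀ : ℕ)) : x i₀ = 1 := by
  simpa using hx.1 i₀ hi₀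

theorem IsIndicatorRow.sub_castSucc {x y : Fin (n + 1) → ℤ}
    (hx : IsIndicatorRow x (Fin.last n)) (hy : IsIndicatorRow y (Fin.last n)) :
    IsDiffRow fun i => x i.castSucc - y i.castSucc := by
  refine ⟨fun i hi => ?_, fun i hi => ?_⟩
  · simp [hx.1 i.castSucc hi, hy.1 i.castSucc hi, Fin.castSucc_ne_last]
  · obtain ⟨hx0, hx1⟩ := hx.2 i.castSucc hi
    obtain ⟨hy0, hy1⟩ := hy.2 i.castSucc hi
    exact abs_le.2 ⟨by linarith, by linarith⟩

theorem IsAdmissibleRow.castSucc {x : Fin (n + 1) → ℤ} (hx : IsAdmissibleRow x)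
    (hlast : x (Fin.last n) = 0) : IsAdmissibleRow fun i => x i.castSucc := by
  rcases hx with ⟨hbot, htop⟩ | ⟨i₀, hi₀, hbot, htop⟩
  · exact .inl ⟨fun i hi => hbot i.castSucc hi, fun i hi => htop i.castSucc hi⟩
  · have hne : i₀ ≠ Fin.last n := by
      rintro rfl
      simp [hbot _ hi₀] at hlast
    refine .inr ⟨i₀.castPred hne, hi₀, fun i hi => ?_, fun i hi => htop i.castSucc hi⟩
    simp only [hbot i.castSucc hi, ← Fin.castSucc_inj (b := i₀.castPred hne),
      Fin.castSucc_castPred]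

theorem IsAdmissibleRow.isIndicatorRow_last {x : Fin (n + 1) → ℤ} (hx : IsAdmissibleRow x)
    (hn : 2 ≤ n) (hlast : x (Fin.last n) ≠ 0) : IsIndicatorRow x (Fin.last n) := by
  rcases hx with ⟨hbot, -⟩ | ⟨i₀, -, hbot, htop⟩
  · exact absurd (hbot (Fin.last n) hn) hlast
  · obtain rfl : Fin.last n = i₀ := by
      by_contra h
      simp [hbot (Fin.last n) hn, h] at hlast
    exact ⟨hbot, htop⟩

theorem exists_isAdmissibleRow_abs_det_le {m : ℕ} (M : Matrix (Fin (m + 3)) (Fin (m + 3)) ℤ)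
    (hM : ∀ i, IsAdmissibleRow (M i)) :
    ∃ N : Matrix (Fin (m + 2)) (Fin (m + 2)) ℤ, (∀ i, IsAdmissibleRow (N i)) ∧
      |M.det| ≤ |N.det| := by
  set ℓ := Fin.last (m + 2)
  have hℓ : 2 ≤ (ℓ : ℕ) := by simp [ℓ]
  by_cases hzero : ∀ i, M i ℓ = 0
  · refine ⟨0, fun _ => .inl ⟨fun _ _ => rfl, fun _ _ => by simp⟩, ?_⟩
    simp [det_eq_zero_of_column_eq_zero ℓ hzero]
  obtain ⟨i₀, hi₀⟩ := not_forall.1 hzero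
  have hpiv : IsIndicatorRow (M i₀) ℓ := (hM i₀).isIndicatorRow_last (by omega) hi₀
  let c : Fin (m + 3) → ℤ := fun i => if i = i₀ then 0 else M i ℓ
  let B : Matrix (Fin (m + 3)) (Fin (m + 3)) ℤ := of fun i j => M i j - c i * M i₀ j
  have hMB : M.det = B.det :=
    det_eq_of_forall_row_eq_smul_add_const c i₀ (by simp [c]) fun i j => by simp [B, c]
  have hBℓ : ∀ i, B i ℓ = if i = i₀ then 1 else 0 := fun i => by
    by_cases hi : i = i₀ <;> simp [B, c, hi, hpiv.apply_self hℓ]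
  have hB : B.det =
      (-1) ^ ((i₀ : ℕ) + ℓ) * (B.submatrix i₀.succAbove Fin.castSucc).det := by
    rw [det_succ_column B ℓ, Finset.sum_eq_single i₀]
    · simp [hBℓ, ℓ]
    · intro i _ hi
      simp [hBℓ, hi]
    · simp
  refine ⟨B.submatrix i₀.succAbove Fin.castSucc, fun i => ?_, by simp [hMB, hB, abs_mul]⟩
  have hne : i₀.succAbove i ≠ i₀ := Fin.succAbove_ne i₀ i
  by_cases hrow : M (i₀.succAbove i) ℓ = 0
  · convert (hM _).castSucc hrow using 1
    ext j
    simp [B, c, hne, hrow]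
  · have hind : IsIndicatorRow (M (i₀.succAbove i)) ℓ :=
      (hM _).isIndicatorRow_last (by omega) hrow
    have hsub : B.submatrix i₀.succAbove Fin.castSucc i =
        fun j => M (i₀.succAbove i) j.castSucc - M i₀ j.castSucc := by
      ext j
      simp [B, c, hne, hind.apply_self hℓ]
    exact hsub ▸ .inl (hind.sub_castSucc hpiv)

theorem abs_det_le_two_of_isAdmissibleRow {m : ℕ} (M : Matrix (Fin (m + 2)) (Fin (m + 2)) ℤ)
    (hM : ∀ i, IsAdmissibleRow (M i)) : |M.det| ≤ 2 := by
  induction m with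
  | zero =>
    have h : ∀ i j, |M i j| ≤ 1 := fun i j => by
      rcases hM i with ⟨-, htop⟩ | ⟨i₀, hi₀, -⟩
      · exact htop j j.isLt
      · exact absurd i₀.isLt (by omega)
    rw [det_fin_two]
    calc |M 0 0 * M 1 1 - M 0 1 * M 1 0| ≤ |M 0 0| * |M 1 1| + |M 0 1| * |M 1 0| := by
          simpa only [abs_mul] using abs_sub (M 0 0 * M 1 1) (M 0 1 * M 1 0)
      _ ≤ 1 * 1 + 1 * 1 := by gcongr <;> exact h _ _
      _ = 2 := by norm_num
  | succ m ih =>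
    obtain ⟨N, hN, hle⟩ := exists_isAdmissibleRow_abs_det_le M hM
    exact hle.trans (ih N hN)

end TwoTopRows

theorem Int.isUnit_of_odd_of_abs_le_two {m : ℤ} (hodd : Odd m) (h : |m| ≤ 2) : IsUnit m := by
  obtain ⟨k, rfl⟩ := hodd
  rw [abs_le] at h
  rw [Int.isUnit_iff]
  omega

theorem det_add_last_col_eq_minors {R : Type*} [CommRing R] (X : Matrix (Fin 4) (Fin 5) R) :
    (of fun j => ![X j 0, X j 1, X j 2 + X j 4, X j 3 + X j 4]).det =
      (X.submatrix id (Fin.succAbove 4)).det + (X.submatrix id (Fin.succAbove 3)).det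
        - (X.submatrix id (Fin.succAbove 2)).det := by
  simp [det_succ_row_zero, Fin.sum_univ_succ, Fin.succAbove]
  ring

theorem lam_isAdmissibleRow : ∀ v : Fin 4 → ZMod 2, ∀ k : Fin 5, 2 ≤ (k : ℕ) →
    IsAdmissibleRow fun i : Fin 4 => Lam v (k.succAbove i) := by
  unfold IsAdmissibleRow IsDiffRow IsIndicatorRow
  decide

theorem intCast_lam : ∀ (v : Fin 4 → ZMod 2) (i : Fin 4),
    ((![Lam v 0, Lam v 1, Lam v 2 + Lam v 4, Lam v 3 + Lam v 4] i : ℤ) : ZMod 2) = v i := by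
  decide

theorem exists_isUnit_det_lam_succAbove (w : Basis (Fin 4) (ZMod 2) (Fin 4 → ZMod 2)) :
    ∃ k : Fin 5, IsUnit (of fun j i => Lam (w j) (k.succAbove i)).det := by
  let X : Matrix (Fin 4) (Fin 5) ℤ := of fun j i => Lam (w j) i
  have hw : (of fun j i => w j i).det ≠ 0 := by
    rw [← Pi.basisFun_det_apply]
    exact ((Pi.basisFun (ZMod 2) (Fin 4)).isUnit_det w).ne_zero
  have hsum : (((X.submatrix id (Fin.succAbove 4)).det + (X.submatrix id (Fin.succAbove 3)).det
      - (X.submatrix id (Fin.succAbove 2)).det : ℤ) : ZMod 2) ≠ 0 := by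
    rw [← det_add_last_col_eq_minors, Int.cast_det]
    convert hw using 2
    ext j i
    exact intCast_lam (w j) i
  have hodd : ∃ k : Fin 5, 2 ≤ (k : ℕ) ∧ Odd (X.submatrix id k.succAbove).det := by
    simp only [← Int.not_even_iff_odd, ← ZMod.intCast_eq_zero_iff_even]
    by_contra! h
    apply hsum
    rw [Int.cast_sub, Int.cast_add, h 4 (by decide), h 3 (by decide), h 2 (by decide)]
    ring
  obtain ⟨k, hk, hkodd⟩ := hodd
  exact ⟨k, Int.isUnit_of_odd_of_abs_le_two hkodd
    (abs_det_le_two_of_isAdmissibleRow (m := 2) _ fun j => lam_isAdmissibleRow (w j) k hk)⟩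

/-- The map `Lam` sends every linearly independent subset of (ℤ/2)⁴ \ {0} to a subset
of ℤ⁵ extending to a ℤ-basis of ℤ⁵. -/
theorem stmt_17 (s : Finset (Fin 4 → ZMod 2))
    (hs : LinearIndependent (ZMod 2) (fun v : s => (v : Fin 4 → ZMod 2))) :
    ∃ b : Module.Basis (Fin 5) ℤ (Fin 5 → ℤ), ∀ v ∈ s, Lam v ∈ Set.range ⇑b := by
  have hs' : LinearIndepOn (ZMod 2) id (s : Set (Fin 4 → ZMod 2)) := hs
  obtain ⟨w, hsw⟩ := exists_finBasis_superset (n := 4) (by simp) hs'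
  obtain ⟨k, hk⟩ := exists_isUnit_det_lam_succAbove w
  obtain ⟨b, hb⟩ := exists_basis_of_isUnit_det_succAbove (fun j => Lam (w j)) k hk
  refine ⟨b, fun v hv => ?_⟩
  obtain ⟨j, rfl⟩ := hsw hv
  exact hb j
end
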